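/- arXiv:math/0103030 — 2 statements merged into one kernel-verified Lean document; each statement's English description precedes it below -/
import Mathlib

section
/- Define Q_{k,m}^{(+)}(q) = q^0 · [k-1 choose m]_q + q^{2k-m} · [k-1 choose m-1]_q. Then for every integer k > 0, Σ_{m=0}^{k} (-1)^m q^{m(m+1)/2} Q_{k,m}^{(+)}(q) = (1+q^k)(q;q)_k. -/
open Finset

/-- The variable `q` in the field of rational functions `ℚ(q)`. -/
noncomputable def q : RatFunc ℚ := RatFunc.X

/-- The q-Pochhammer symbol `(q;q)_n = ∏_{i=1}^n (1 - q^i)`. -/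
noncomputable def qPoch (n : ℕ) : RatFunc ℚ := ∏ i ∈ range n, (1 - q ^ (i + 1))

/-- The Gaussian binomial coefficient `[M choose N]_q`. -/
noncomputable def qBinom (M N : ℤ) : RatFunc ℚ :=
  if 0 ≤ N ∧ N ≤ M then qPoch M.toNat / (qPoch N.toNat * qPoch (M - N).toNat) else 0

/-- `Q_{k,m}^{(+)}(q) = [k-1 choose m]_q + q^{2k-m} [k-1 choose m-1]_q`. -/
noncomputable def Qplus (k m : ℕ) : RatFunc ℚ :=
  qBinom ((k : ℤ) - 1) (m : ℤ) + q ^ (2 * k - m) * qBinom ((k : ℤ) - 1) ((m : ℤ) - 1)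

lemma q_pow_ne_one (n : ℕ) : q ^ (n + 1) ≠ 1 := by
  intro h
  have : (Polynomial.X : Polynomial ℚ) ^ (n+1) = 1 := by
    apply RatFunc.algebraMap_injective ℚ |>.eq_iff.mp ?_
    simpa [q, RatFunc.algebraMap_X, map_pow] using h
  have := congrArg Polynomial.natDegree this
  simp [Polynomial.natDegree_X_pow] at this

lemma qPoch_ne_zero (n : ℕ) : qPoch n ≠ 0 :=
  Finset.prod_ne_zero_iff.mpr fun i _ => sub_ne_zero_of_ne (q_pow_ne_one i).symm

lemma qPoch_zero : qPoch 0 = 1 := by simp [qPoch]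

lemma qPoch_succ (n : ℕ) : qPoch (n + 1) = qPoch n * (1 - q ^ (n + 1)) := by
  simp [qPoch, Finset.prod_range_succ]

lemma qBinom_nat (n m : ℕ) (h : m ≤ n) :
    qBinom (n : ℤ) (m : ℤ) = qPoch n / (qPoch m * qPoch (n - m)) := by
  have h2 : ((n : ℤ) - m).toNat = n - m := by omega
  simp [qBinom, h2, Int.ofNat_le.mpr h]

lemma qBinom_zero (n : ℕ) : qBinom (n : ℤ) 0 = 1 := by
  have := qBinom_nat n 0 (Nat.zero_le _)
  rw [Nat.cast_zero] at this
  rw [this]; simp [qPoch_zero, div_self (qPoch_ne_zero n)]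

lemma qBinom_self (n : ℕ) : qBinom (n : ℤ) (n : ℤ) = 1 := by
  rw [qBinom_nat n n le_rfl]
  simp [qPoch_zero, div_self (qPoch_ne_zero n)]

lemma qBinom_of_gt (n m : ℕ) (h : n < m) : qBinom (n : ℤ) (m : ℤ) = 0 := by
  rw [qBinom, if_neg]; rintro ⟨-, h2⟩; exact absurd (Int.ofNat_le.mp h2) (by omega)

lemma qBinom_neg_one (M : ℤ) : qBinom M (-1) = 0 := by
  simp [qBinom]

lemma pascal (m d : ℕ) :
    qBinom ((m + d + 1 : ℕ) : ℤ) ((m + 1 : ℕ) : ℤ)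
      = qBinom ((m + d : ℕ) : ℤ) ((m + 1 : ℕ) : ℤ)
        + q ^ d * qBinom ((m + d : ℕ) : ℤ) (m : ℤ) := by
  cases d with
  | zero =>
      simp only [Nat.add_zero, pow_zero, one_mul]
      rw [qBinom_self, qBinom_of_gt m (m+1) (by omega), qBinom_self, zero_add]
  | succ e =>
      rw [qBinom_nat (m+(e+1)+1) (m+1) (by omega), qBinom_nat (m+(e+1)) (m+1) (by omega),
          qBinom_nat (m+(e+1)) m (by omega)]
      have h1 : m + (e+1) + 1 - (m+1) = e + 1 := by omega
      have h2 : m + (e+1) - (m+1) = e := by omega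
      have h3 : m + (e+1) - m = e + 1 := by omega
      rw [h1, h2, h3, show m + (e+1) + 1 = (m+e+1)+1 by omega, show m + (e+1) = (m+e)+1 by omega]
      rw [qPoch_succ (m+e+1), qPoch_succ (m+e), qPoch_succ e, qPoch_succ m]
      have A := qPoch_ne_zero m
      have B := qPoch_ne_zero e
      have C := qPoch_ne_zero (m+e)
      have D : (1 : RatFunc ℚ) - q ^ (e+1) ≠ 0 := sub_ne_zero_of_ne (q_pow_ne_one e).symm
      have E : (1 : RatFunc ℚ) - q ^ (m+1) ≠ 0 := sub_ne_zero_of_ne (q_pow_ne_one m).symm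
      have F : (1 : RatFunc ℚ) - q ^ (m+e+1+1) ≠ 0 := sub_ne_zero_of_ne (q_pow_ne_one (m+e+1)).symm
      field_simp
      ring

lemma key (n : ℕ) :
    ∑ m ∈ range (n + 1), (-1 : RatFunc ℚ) ^ m * q ^ (m * (m + 1) / 2) * qBinom (n : ℤ) (m : ℤ)
      = qPoch n := by
  induction n with
  | zero =>
      rw [Finset.sum_range_one, qPoch_zero]
      have h0 : qBinom ((0:ℕ):ℤ) ((0:ℕ):ℤ) = 1 := by rw [Nat.cast_zero]; exact qBinom_zero 0
      push_cast at h0; simp [h0]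
  | succ n ih =>
      rw [Finset.sum_range_succ']
      have step : ∀ m ∈ range (n + 1),
          (-1 : RatFunc ℚ) ^ (m+1) * q ^ ((m+1) * (m+1+1) / 2) * qBinom ((n+1 : ℕ) : ℤ) ((m+1 : ℕ) : ℤ)
          = (-1 : RatFunc ℚ) ^ (m+1) * q ^ ((m+1) * (m+1+1) / 2) * qBinom ((n : ℕ) : ℤ) ((m+1 : ℕ) : ℤ)
            + (-(q ^ (n+1))) * ((-1 : RatFunc ℚ) ^ m * q ^ (m * (m+1) / 2) * qBinom (n : ℤ) (m : ℤ)) := by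
        intro m hm
        have hmn : m ≤ n := Nat.lt_succ_iff.mp (mem_range.mp hm)
        have hp := pascal m (n - m)
        rw [show m + (n - m) + 1 = n + 1 by omega, show m + (n - m) = n by omega] at hp
        rw [hp, mul_add]
        congr 1
        have hexp : q ^ ((m+1) * (m+1+1) / 2) * q ^ (n - m)
            = q ^ (m * (m+1) / 2) * q ^ (n+1) := by
          rw [← pow_add, ← pow_add]
          congr 1
          have : (m+1) * (m+1+1) = m * (m+1) + 2 * (m+1) := by ring
          omega
        linear_combination ((-1 : RatFunc ℚ) ^ (m+1) * qBinom (n : ℤ) (m : ℤ)) * hexp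
      rw [Finset.sum_congr rfl step, Finset.sum_add_distrib, ← Finset.mul_sum, ih]
      rw [Finset.sum_range_succ, qBinom_of_gt n (n+1) (by omega), mul_zero, add_zero]
      have h0 : qBinom ((n+1:ℕ):ℤ) ((0:ℕ):ℤ) = 1 := by rw [Nat.cast_zero]; exact qBinom_zero (n+1)
      have ihs := ih
      rw [Finset.sum_range_succ'] at ihs
      have h0' : qBinom ((n:ℕ):ℤ) ((0:ℕ):ℤ) = 1 := by rw [Nat.cast_zero]; exact qBinom_zero n
      rw [h0'] at ihs
      simp only [pow_zero, one_mul, mul_one, Nat.zero_mul, Nat.zero_div] at ihs h0 ⊢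
      rw [h0]
      have hsum : ∑ m ∈ range n, (-1 : RatFunc ℚ) ^ (m+1) * q ^ ((m+1) * (m+1+1) / 2) * qBinom ((n:ℕ):ℤ) ((m+1:ℕ):ℤ)
          = qPoch n - 1 := eq_sub_of_add_eq ihs
      rw [hsum, qPoch_succ]
      ring

/-- For every integer `k > 0`,
`∑_{m=0}^{k} (-1)^m q^{m(m+1)/2} Q_{k,m}^{(+)}(q) = (1+q^k)(q;q)_k`. -/
theorem Qplus_alternating_sum (k : ℕ) (hk : 0 < k) :
    ∑ m ∈ range (k + 1), (-1 : RatFunc ℚ) ^ m * q ^ (m * (m + 1) / 2) * Qplus k m =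
      (1 + q ^ k) * qPoch k := by
  obtain ⟨n, rfl⟩ : ∃ n, k = n + 1 := ⟨k - 1, by omega⟩
  have hcast : ((n + 1 : ℕ) : ℤ) - 1 = (n : ℤ) := by push_cast; ring
  simp only [Qplus, hcast]
  have split : ∀ m ∈ range (n + 1 + 1),
      (-1 : RatFunc ℚ) ^ m * q ^ (m * (m + 1) / 2)
        * (qBinom (n : ℤ) (m : ℤ) + q ^ (2 * (n + 1) - m) * qBinom (n : ℤ) ((m : ℤ) - 1))
      = (-1 : RatFunc ℚ) ^ m * q ^ (m * (m + 1) / 2) * qBinom (n : ℤ) (m : ℤ)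
        + (-1 : RatFunc ℚ) ^ m * q ^ (m * (m + 1) / 2)
          * (q ^ (2 * (n + 1) - m) * qBinom (n : ℤ) ((m : ℤ) - 1)) :=
    fun m _ => mul_add _ _ _
  rw [Finset.sum_congr rfl split, Finset.sum_add_distrib]
  have sum1 : ∑ m ∈ range (n + 1 + 1),
      (-1 : RatFunc ℚ) ^ m * q ^ (m * (m + 1) / 2) * qBinom (n : ℤ) (m : ℤ) = qPoch n := by
    rw [Finset.sum_range_succ, qBinom_of_gt n (n+1) (by omega), mul_zero, add_zero]
    exact key n
  rw [sum1]
  have sum2 : ∑ m ∈ range (n + 1 + 1),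
      (-1 : RatFunc ℚ) ^ m * q ^ (m * (m + 1) / 2)
        * (q ^ (2 * (n + 1) - m) * qBinom (n : ℤ) ((m : ℤ) - 1))
      = (-(q ^ (2 * (n + 1)))) * qPoch n := by
    rw [Finset.sum_range_succ']
    have hz : ((0 : ℕ) : ℤ) - 1 = (-1 : ℤ) := by norm_num
    rw [hz, qBinom_neg_one, mul_zero, mul_zero, add_zero]
    have step : ∀ j ∈ range (n + 1),
        (-1 : RatFunc ℚ) ^ (j+1) * q ^ ((j+1) * (j+1+1) / 2)
          * (q ^ (2 * (n + 1) - (j+1)) * qBinom (n : ℤ) (((j+1 : ℕ) : ℤ) - 1))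
        = (-(q ^ (2 * (n + 1)))) * ((-1 : RatFunc ℚ) ^ j * q ^ (j * (j+1) / 2) * qBinom (n : ℤ) (j : ℤ)) := by
      intro j hj
      have hjn : j ≤ n := Nat.lt_succ_iff.mp (mem_range.mp hj)
      have hc : ((j + 1 : ℕ) : ℤ) - 1 = (j : ℤ) := by push_cast; ring
      rw [hc]
      have hexp : q ^ ((j+1) * (j+1+1) / 2) * q ^ (2 * (n + 1) - (j+1))
          = q ^ (j * (j+1) / 2) * q ^ (2 * (n + 1)) := by
        rw [← pow_add, ← pow_add]
        congr 1
        have : (j+1) * (j+1+1) = j * (j+1) + 2 * (j+1) := by ring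
        omega
      linear_combination ((-1 : RatFunc ℚ) ^ (j+1) * qBinom (n : ℤ) (j : ℤ)) * hexp
    rw [Finset.sum_congr rfl step, ← Finset.mul_sum, key n]
  rw [sum2, qPoch_succ]
  have : q ^ (2 * (n + 1)) = (q ^ (n + 1)) ^ 2 := by rw [← pow_mul]; ring_nf
  rw [this]
  ring
end

section
/- For any integer p_0 ≥ 1, the formal power series 1/(q;q)_∞ · (1 + Σ_{k>0} (-1)^k q^{k^2 p_0 + k(k-1)/2}(1+q^k)) equals ∏_{n ≥ 1, n ≢ 0, p_0, p_0+1 (mod 2p_0+1)} (1-q^n)^{-1}. -/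
namespace GA

noncomputable def qb (q : ℝ) : ℕ → ℕ → ℝ
  | 0, 0 => 1
  | 0, _+1 => 0
  | _+1, 0 => 1
  | n+1, k+1 => qb q n (k+1) * q^(k+1) + qb q n k

lemma qb_zero (q : ℝ) (n : ℕ) : qb q n 0 = 1 := by cases n <;> rfl

lemma qb_eq_zero (q : ℝ) : ∀ n k, n < k → qb q n k = 0 := by
  intro n
  induction n with
  | zero => intro k hk; match k, hk with | k+1, _ => rfl
  | succ n ih =>
    intro k hk
    match k, hk with
    | k+1, hk =>
      show qb q n (k+1) * q^(k+1) + qb q n k = 0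
      rw [ih (k+1) (by omega), ih k (by omega)]; ring

/-- triangular number as `k*(k-1)/2` -/
lemma tri_succ (k : ℕ) : (k+1)*((k+1)-1)/2 = k*(k-1)/2 + k := by
  rcases k with _ | j
  · rfl
  · have h : (j+1+1)*((j+1+1)-1) = (j+1)*((j+1)-1) + 2*(j+1) := by simp; ring
    obtain ⟨r, hr⟩ := Nat.even_mul_pred_self (j+1)
    omega

/-- Gauss's q-binomial theorem. -/
lemma gauss (q : ℝ) (n : ℕ) : ∀ z : ℝ,
    ∏ i ∈ Finset.range n, (1 + z * q^i)
      = ∑ k ∈ Finset.range (n+1), qb q n k * q^(k*(k-1)/2) * z^k := by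
  induction n with
  | zero => intro z; simp [qb]
  | succ n ih =>
    intro z
    have key : ∏ i ∈ Finset.range (n+1), (1 + z * q^i)
        = (1 + z) * ∏ i ∈ Finset.range n, (1 + (z*q) * q^i) := by
      rw [Finset.prod_range_succ']
      simp only [pow_zero, mul_one]
      rw [mul_comm]
      congr 1
      refine Finset.prod_congr rfl fun i _ => ?_
      ring
    rw [key, ih (z*q), add_mul, one_mul]
    have e1 : (∑ k ∈ Finset.range (n+1), qb q n k * q^(k*(k-1)/2) * (z*q)^k)
        = ∑ k ∈ Finset.range (n+1), qb q n k * q^(k*(k-1)/2 + k) * z^k := by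
      refine Finset.sum_congr rfl fun k _ => ?_
      rw [mul_pow, pow_add]; ring
    have e2 : z * (∑ k ∈ Finset.range (n+1), qb q n k * q^(k*(k-1)/2 + k) * z^k)
        = ∑ k ∈ Finset.range (n+1), qb q n k * q^(k*(k-1)/2 + k) * z^(k+1) := by
      rw [Finset.mul_sum]
      refine Finset.sum_congr rfl fun k _ => ?_
      ring
    rw [e1, e2]
    have hsplit : ∀ x, qb q (n+1) (x+1) * q^((x+1)*((x+1)-1)/2) * z^(x+1)
        = qb q n (x+1) * q^((x+1)*((x+1)-1)/2 + (x+1)) * z^(x+1)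
          + qb q n x * q^(x*(x-1)/2 + x) * z^(x+1) := by
      intro x
      have hq : qb q (n+1) (x+1) = qb q n (x+1) * q^(x+1) + qb q n x := rfl
      rw [hq, tri_succ x, pow_add, pow_add, pow_add]
      ring
    rw [Finset.sum_range_succ' (fun k => qb q (n+1) k * q^(k*(k-1)/2) * z^k) (n+1)]
    rw [Finset.sum_congr rfl (fun x _ => hsplit x), Finset.sum_add_distrib]
    have h5 := Finset.sum_range_succ' (fun k => qb q n k * q^(k*(k-1)/2 + k) * z^k) (n+1)
    have h6 := Finset.sum_range_succ (fun k => qb q n k * q^(k*(k-1)/2 + k) * z^k) (n+1)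
    rw [qb_eq_zero q n (n+1) (by omega)] at h6
    simp only [qb_zero, pow_zero, mul_one, one_mul, zero_mul, add_zero, Nat.zero_mul,
      Nat.zero_div] at h5 h6 ⊢
    linarith [h5, h6]

open Filter Topology Real

/-- exp-log: positive factors with summable logs have a (positive) product. -/
lemma hasProd_exp {ι : Type*} (c : ι → ℝ) (hc : ∀ i, 0 < c i)
    (hs : Summable fun i => Real.log (c i)) :
    HasProd c (Real.exp (∑' i, Real.log (c i))) := by
  have h := hs.hasSum.rexp
  have : (rexp ∘ fun i => Real.log (c i)) = c := funext fun i => Real.exp_log (hc i)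
  rwa [this] at h

lemma neg_log_le (x : ℝ) (h0 : 0 ≤ x) (h1 : x < 1) : -Real.log (1 - x) ≤ x / (1 - x) := by
  have hx : (0:ℝ) < 1 - x := by linarith
  have := Real.log_le_sub_one_of_pos (inv_pos.mpr hx)
  rw [Real.log_inv] at this
  have : -Real.log (1-x) ≤ (1-x)⁻¹ - 1 := this
  have he : (1-x)⁻¹ - 1 = x / (1-x) := by field_simp; ring
  linarith [he ▸ this]

lemma summable_log_one_sub {ι : Type*} (q : ℝ) (hq0 : 0 < q) (hq1 : q < 1)
    (u : ι → ℕ) (hu : ∀ i, 1 ≤ u i) (hsum : Summable fun i => q ^ u i) :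
    Summable fun i => Real.log (1 - q ^ u i) := by
  refine (hsum.mul_right ((1-q)⁻¹)).of_norm_bounded (fun i => ?_)
  have hx0 : (0:ℝ) < q ^ u i := pow_pos hq0 _
  have hx1 : q ^ u i ≤ q := by
    calc q ^ u i ≤ q ^ 1 := pow_le_pow_of_le_one (le_of_lt hq0) (le_of_lt hq1) (hu i)
    _ = q := pow_one q
  have hxlt : q ^ u i < 1 := lt_of_le_of_lt hx1 hq1
  have hneg : Real.log (1 - q ^ u i) ≤ 0 :=
    Real.log_nonpos (by linarith) (by linarith)
  rw [Real.norm_eq_abs, abs_of_nonpos hneg]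
  calc -Real.log (1 - q ^ u i) ≤ q ^ u i / (1 - q ^ u i) := neg_log_le _ (le_of_lt hx0) hxlt
    _ ≤ q ^ u i / (1 - q) := by
        apply div_le_div_of_nonneg_left (le_of_lt hx0) (by linarith) (by linarith)
    _ = q ^ u i * (1-q)⁻¹ := div_eq_mul_inv _ _

/-- packaged: products of (1 - q^(u i)). -/
lemma hasProd_one_sub {ι : Type*} (q : ℝ) (hq0 : 0 < q) (hq1 : q < 1)
    (u : ι → ℕ) (hu : ∀ i, 1 ≤ u i) (hsum : Summable fun i => q ^ u i) :
    HasProd (fun i => 1 - q ^ u i)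
      (Real.exp (∑' i, Real.log (1 - q ^ u i))) := by
  apply hasProd_exp
  · intro i
    have : q ^ u i < 1 := by
      calc q ^ u i ≤ q ^ 1 := pow_le_pow_of_le_one (le_of_lt hq0) (le_of_lt hq1) (hu i)
      _ = q := pow_one q
      _ < 1 := hq1
    linarith
  · exact summable_log_one_sub q hq0 hq1 u hu hsum

lemma hasProd_one_sub_inv {ι : Type*} (q : ℝ) (hq0 : 0 < q) (hq1 : q < 1)
    (u : ι → ℕ) (hu : ∀ i, 1 ≤ u i) (hsum : Summable fun i => q ^ u i) :
    HasProd (fun i => (1 - q ^ u i)⁻¹)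
      (Real.exp (-∑' i, Real.log (1 - q ^ u i))) := by
  have h1 : ∀ i, (0:ℝ) < 1 - q ^ u i := by
    intro i
    have : q ^ u i < 1 := by
      calc q ^ u i ≤ q ^ 1 := pow_le_pow_of_le_one (le_of_lt hq0) (le_of_lt hq1) (hu i)
      _ = q := pow_one q
      _ < 1 := hq1
    linarith
  have h := hasProd_exp (fun i => (1 - q ^ u i)⁻¹) (fun i => inv_pos.mpr (h1 i)) ?_
  · have he : (∑' i, Real.log ((1 - q ^ u i)⁻¹)) = -∑' i, Real.log (1 - q ^ u i) := by
      rw [← tsum_neg]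
      exact tsum_congr fun i => Real.log_inv _
    rwa [he] at h
  · have : (fun i => Real.log ((1 - q ^ u i)⁻¹)) = fun i => -Real.log (1 - q ^ u i) :=
      funext fun i => Real.log_inv _
    rw [this]
    exact (summable_log_one_sub q hq0 hq1 u hu hsum).neg

/-- partial q-Pochhammer -/
noncomputable def PP (q : ℝ) (n : ℕ) : ℝ := ∏ i ∈ Finset.range n, (1 - q^(i+1))

lemma PP_pos {q : ℝ} (hq0 : 0 < q) (hq1 : q < 1) (n : ℕ) : 0 < PP q n := by
  apply Finset.prod_pos
  intro i _
  have : q ^ (i+1) < 1 := pow_lt_one₀ (le_of_lt hq0) hq1 (by omega)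
  linarith

lemma PP_succ (q : ℝ) (n : ℕ) : PP q (n+1) = PP q n * (1 - q^(n+1)) :=
  Finset.prod_range_succ _ _

lemma PP_antitone {q : ℝ} (hq0 : 0 < q) (hq1 : q < 1) : Antitone (PP q) := by
  apply antitone_nat_of_succ_le
  intro n
  rw [PP_succ]
  have h1 : 0 < PP q n := PP_pos hq0 hq1 n
  nlinarith [pow_pos hq0 (n+1)]

lemma summable_geom_shift (q : ℝ) (hq0 : 0 < q) (hq1 : q < 1) (u : ℕ → ℕ)
    (hu : ∀ n, n ≤ u n) : Summable fun n => q ^ u n := by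
  refine (summable_geometric_of_lt_one (le_of_lt hq0) hq1).of_nonneg_of_le
    (fun n => le_of_lt (pow_pos hq0 _)) (fun n => ?_)
  exact pow_le_pow_of_le_one (le_of_lt hq0) (le_of_lt hq1) (hu n)

/-- The infinite pochhammer as limit of PP -/
lemma hasProd_PP (q : ℝ) (hq0 : 0 < q) (hq1 : q < 1) :
    HasProd (fun i : ℕ => 1 - q ^ (i+1))
      (Real.exp (∑' i : ℕ, Real.log (1 - q ^ (i+1)))) :=
  hasProd_one_sub q hq0 hq1 (fun i => i+1) (fun i => Nat.le_add_left 1 i)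
    (summable_geom_shift q hq0 hq1 _ (fun n => Nat.le_succ n))

noncomputable def PPinf (q : ℝ) : ℝ := Real.exp (∑' i : ℕ, Real.log (1 - q ^ (i+1)))

lemma PPinf_pos (q : ℝ) : 0 < PPinf q := Real.exp_pos _

lemma tendsto_PP (q : ℝ) (hq0 : 0 < q) (hq1 : q < 1) :
    Tendsto (PP q) atTop (𝓝 (PPinf q)) :=
  (hasProd_PP q hq0 hq1).tendsto_prod_nat

lemma PPinf_le_PP {q : ℝ} (hq0 : 0 < q) (hq1 : q < 1) (n : ℕ) : PPinf q ≤ PP q n := by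
  apply le_of_tendsto (tendsto_PP q hq0 hq1)
  filter_upwards [eventually_ge_atTop n] with m hm
  exact PP_antitone hq0 hq1 hm

lemma PP_le_one {q : ℝ} (hq0 : 0 < q) (hq1 : q < 1) (n : ℕ) : PP q n ≤ 1 := by
  have := PP_antitone hq0 hq1 (Nat.zero_le n)
  simpa [PP] using this

/-- closed form of the q-binomial -/
lemma qb_closed {q : ℝ} (hq0 : 0 < q) (hq1 : q < 1) :
    ∀ n k, k ≤ n → qb q n k = PP q n / (PP q k * PP q (n-k)) := by
  intro n
  induction n with
  | zero =>
    intro k hk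
    interval_cases k
    simp [qb, PP]
  | succ n ih =>
    intro k hk
    rcases k with _ | j
    · rw [qb_zero, Nat.sub_zero]
      have h0 : PP q 0 = 1 := Finset.prod_range_zero _
      rw [h0, one_mul, div_self (ne_of_gt (PP_pos hq0 hq1 (n+1)))]
    · have hqb : qb q (n+1) (j+1) = qb q n (j+1) * q^(j+1) + qb q n j := rfl
      rcases Nat.lt_or_ge j n with hj | hj
      · -- j+1 ≤ n
        obtain ⟨a, rfl⟩ : ∃ a, n = j + 1 + a := ⟨n - (j+1), by omega⟩
        rw [hqb, ih (j+1) (by omega), ih j (by omega)]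
        have e1 : j + 1 + a - (j+1) = a := by omega
        have e2 : j + 1 + a - j = a + 1 := by omega
        have e3 : j + 1 + a + 1 - (j+1) = a + 1 := by omega
        rw [e1, e2, e3]
        have hPj : PP q j ≠ 0 := ne_of_gt (PP_pos hq0 hq1 j)
        have hPj1 : PP q (j+1) ≠ 0 := ne_of_gt (PP_pos hq0 hq1 (j+1))
        have hPa : PP q a ≠ 0 := ne_of_gt (PP_pos hq0 hq1 a)
        have hPa1 : PP q (a+1) ≠ 0 := ne_of_gt (PP_pos hq0 hq1 (a+1))
        have key : q^(j+1) * (1 - q^(a+1)) + (1 - q^(j+1)) = 1 - q^(j+1+a+1) := by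
          have hp : q^(j+1) * q^(a+1) = q^(j+1+a+1) := by rw [← pow_add]; ring_nf
          linarith [hp]
        rw [PP_succ q (j+1+a), PP_succ q a, PP_succ q j, ← key]
        have hA : PP q (j+1+a) ≠ 0 := ne_of_gt (PP_pos hq0 hq1 _)
        have hx : (1:ℝ) - q^(j+1) ≠ 0 := by
          have : q ^ (j+1) < 1 := pow_lt_one₀ (le_of_lt hq0) hq1 (by omega)
          linarith
        have hy : (1:ℝ) - q^(a+1) ≠ 0 := by
          have : q ^ (a+1) < 1 := pow_lt_one₀ (le_of_lt hq0) hq1 (by omega)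
          linarith
        field_simp
      · -- j = n, k = n+1
        have hj' : j = n := by omega
        subst hj'
        rw [hqb, qb_eq_zero q j (j+1) (by omega), ih j (le_refl j)]
        simp only [Nat.sub_self, Nat.add_sub_cancel]
        have h0 : PP q 0 = 1 := Finset.prod_range_zero _
        rw [h0]
        have hPj1 : PP q (j+1) ≠ 0 := ne_of_gt (PP_pos hq0 hq1 (j+1))
        have hPj : PP q j ≠ 0 := ne_of_gt (PP_pos hq0 hq1 j)
        field_simp
        ring

section Core

variable {q : ℝ}

lemma zpow_mul_nat (hq : q ≠ 0) (a : ℤ) (k : ℕ) : (q^a)^k = q^(a*k) := by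
  induction k with
  | zero => simp
  | succ k ih =>
    rw [pow_succ, ih, ← zpow_add₀ hq]
    congr 1
    push_cast
    ring

lemma zprod_sum {ι : Type*} (hq : q ≠ 0) (s : Finset ι) (c : ι → ℤ) :
    ∏ i ∈ s, q ^ (c i) = q ^ (∑ i ∈ s, c i) := by
  classical
  induction s using Finset.cons_induction with
  | empty => simp
  | cons a s ha ih =>
    rw [Finset.prod_cons, Finset.sum_cons, ih, ← zpow_add₀ hq]

/-- the exponent function over ℤ -/
noncomputable def Eexp (p₀ : ℕ) (j : ℤ) : ℕ := (((2*p₀+1 : ℕ) * j^2 - j)/2).toNat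

lemma Eexp_spec (p₀ : ℕ) (j : ℤ) :
    2 * (Eexp p₀ j : ℤ) = (2*(p₀:ℤ)+1) * j^2 - j := by
  have hnn : (0:ℤ) ≤ (2*(p₀:ℤ)+1) * j^2 - j := by nlinarith [sq_nonneg j, sq_nonneg (j-1)]
  have hdvd : (2:ℤ) ∣ (2*(p₀:ℤ)+1) * j^2 - j := by
    have h1 : (2:ℤ) ∣ j^2 - j := by
      obtain ⟨c, hc⟩ := Int.even_mul_succ_self (j-1)
      exact ⟨c, by nlinarith [hc]⟩
    obtain ⟨c, hc⟩ := h1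
    exact ⟨(p₀:ℤ)*j^2 + c, by linarith [hc]⟩
  obtain ⟨c, hc⟩ := hdvd
  have hc0 : 0 ≤ c := by linarith
  unfold Eexp
  push_cast
  rw [hc]
  rw [Int.mul_ediv_cancel_left c (by norm_num)]
  rw [Int.toNat_of_nonneg hc0]

lemma tri_cast (k : ℕ) : 2 * ((k*(k-1)/2 : ℕ) : ℤ) = (k:ℤ)^2 - k := by
  obtain ⟨c, hc⟩ := Nat.even_mul_pred_self k
  have h2 : (k:ℤ)^2 - k = ((k*(k-1) : ℕ) : ℤ) := by
    rcases k with _ | j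
    · simp
    · push_cast [Nat.succ_sub_one]
      ring
  rw [h2]
  exact_mod_cast (by omega : 2*(k*(k-1)/2) = k*(k-1))

lemma Eexp_natCast (p₀ k : ℕ) : Eexp p₀ (k : ℤ) = k^2*p₀ + k*(k-1)/2 := by
  have h1 := tri_cast k
  have h2 := Eexp_spec p₀ (k : ℤ)
  have h3 : ((Eexp p₀ (k:ℤ) : ℕ) : ℤ) = ((k^2*p₀ + k*(k-1)/2 : ℕ) : ℤ) := by
    push_cast
    push_cast at h1
    linarith
  exact_mod_cast h3

lemma Eexp_neg_natCast (p₀ k : ℕ) : Eexp p₀ (-(k : ℤ)) = k^2*p₀ + k*(k-1)/2 + k := by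
  have h1 := Eexp_natCast p₀ k
  have h2 := Eexp_spec p₀ (k : ℤ)
  have h3 := Eexp_spec p₀ (-(k : ℤ))
  have : 2 * (Eexp p₀ (-(k:ℤ)) : ℤ) = 2 * (Eexp p₀ (k:ℤ) : ℤ) + 2*k := by
    rw [h2, h3]; ring
  omega

lemma Eexp_ge (p₀ : ℕ) (hp : 1 ≤ p₀) (j : ℤ) : j.natAbs ≤ Eexp p₀ j := by
  have h := Eexp_spec p₀ j
  have hN : (3:ℤ) ≤ 2*(p₀:ℤ)+1 := by
    have : (1:ℤ) ≤ (p₀:ℤ) := by exact_mod_cast hp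
    linarith
  have habs : (j.natAbs : ℤ) = |j| := Int.abs_eq_natAbs j ▸ rfl
  have key : 2 * (j.natAbs : ℤ) ≤ 2 * (Eexp p₀ j : ℤ) := by
    rw [h]
    rcases le_or_gt 0 j with hj | hj
    · rw [habs, abs_of_nonneg hj]
      nlinarith [sq_nonneg (j-1), sq_nonneg j]
    · rw [habs, abs_of_neg hj]
      nlinarith [sq_nonneg (j+1), sq_nonneg j]
  omega

lemma sum_range_id_int (m : ℕ) : 2 * (∑ i ∈ Finset.range m, ((i:ℤ)+1)) = m*(m+1) := by
  induction m with
  | zero => simp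
  | succ n ih =>
    rw [Finset.sum_range_succ, mul_add, ih]
    push_cast
    ring

/-- the two one-sided products -/
noncomputable def AA (p₀ : ℕ) (q : ℝ) (m : ℕ) : ℝ :=
  (∏ i ∈ Finset.range m, (1 - q^((2*p₀+1)*i + (p₀+1)))) *
    ∏ i ∈ Finset.range m, (1 - q^(p₀ + (2*p₀+1)*i))

/-- the term of the finite theta sum -/
noncomputable def tt (p₀ : ℕ) (q : ℝ) (m k : ℕ) : ℝ :=
  (-1:ℝ)^((k:ℤ) - m) * qb (q^(2*p₀+1)) (2*m) k * q ^ Eexp p₀ ((k:ℤ) - m)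

lemma finite_id (p₀ : ℕ) (q : ℝ) (hq0 : 0 < q) (hq1 : q < 1) (m : ℕ) :
    AA p₀ q m = ∑ k ∈ Finset.range (2*m+1), tt p₀ q m k := by
  have hqne : q ≠ 0 := ne_of_gt hq0
  set N : ℕ := 2*p₀+1 with hN
  set Q : ℝ := q^N with hQdef
  have hQne : Q ≠ 0 := pow_ne_zero _ hqne
  set z : ℝ := -q^((p₀ : ℤ) - N*m) with hz
  have hg := gauss Q (2*m) z
  set S : ℤ := ∑ i ∈ Finset.range m, ((i:ℤ)+1) with hS
  have hS2 : 2*S = m*(m+1) := sum_range_id_int m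
  set C : ℝ := (-1:ℝ)^m * q^((m:ℤ)*p₀ - N*S) with hC
  have hCne : C ≠ 0 := by
    apply mul_ne_zero
    · exact pow_ne_zero _ (by norm_num)
    · exact zpow_ne_zero _ hqne
  -- rewrite Q powers as q zpows
  have hQz : ∀ i : ℕ, Q^i = q^((N:ℤ)*i) := by
    intro i
    have hcast : ((N*i : ℕ) : ℤ) = (N:ℤ)*i := by push_cast; ring
    rw [hQdef, ← pow_mul, ← zpow_natCast q (N*i), hcast]
  -- LHS
  have hsplit : ∏ i ∈ Finset.range (2*m), (1 + z*Q^i)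
      = (∏ i ∈ Finset.range m, (1 + z*Q^i)) * ∏ i ∈ Finset.range m, (1 + z*Q^(m+i)) := by
    rw [two_mul, Finset.prod_range_add]
  have h2 : ∀ i : ℕ, 1 + z*Q^(m+i) = 1 - q^(p₀ + N*i) := by
    intro i
    rw [hz, hQz (m+i), neg_mul, ← zpow_add₀ hqne]
    have he : (p₀ : ℤ) - N*m + N*((m+i : ℕ) : ℤ) = ((p₀ + N*i : ℕ) : ℤ) := by push_cast; ring
    rw [he, zpow_natCast]
    ring
  have h3 : ∀ i ∈ Finset.range m, 1 + z*Q^(m-1-i)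
      = (-q^((p₀:ℤ) - N*((i:ℤ)+1))) * (1 - q^(N*i + (p₀+1))) := by
    intro i hi
    have him : i < m := Finset.mem_range.mp hi
    rw [hz, hQz (m-1-i), neg_mul, ← zpow_add₀ hqne]
    have he : (p₀ : ℤ) - N*m + N*((m-1-i : ℕ) : ℤ) = (p₀:ℤ) - N*((i:ℤ)+1) := by
      have : ((m-1-i : ℕ) : ℤ) = (m:ℤ) - 1 - i := by
        have : i + 1 ≤ m := him
        push_cast [Nat.cast_sub (by omega : 1 + i ≤ m), Nat.sub_sub]
        ring
      rw [this]
      ring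
    rw [he]
    have hz2 : ((N*i + (p₀+1) : ℕ) : ℤ) = -((p₀:ℤ) - N*((i:ℤ)+1)) := by
      push_cast [hN]
      ring
    rw [show (1:ℝ) - q^(N*i + (p₀+1)) = 1 - q^(((N*i+(p₀+1):ℕ)):ℤ) by rw [zpow_natCast]]
    have key : q^((p₀:ℤ) - N*((i:ℤ)+1)) * q^(((N*i+(p₀+1):ℕ)):ℤ) = 1 := by
      rw [← zpow_add₀ hqne,
        show ((p₀:ℤ) - N*((i:ℤ)+1)) + ((N*i+(p₀+1):ℕ):ℤ) = 0 by push_cast [hN]; ring,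
        zpow_zero]
    linear_combination (-1 : ℝ) * key
  have hLHS : ∏ i ∈ Finset.range (2*m), (1 + z*Q^i) = C * AA p₀ q m := by
    rw [hsplit]
    rw [← Finset.prod_range_reflect (fun i => 1 + z*Q^i) m]
    rw [Finset.prod_congr rfl h3]
    rw [Finset.prod_mul_distrib]
    have hsgn : ∏ i ∈ Finset.range m, (-q^((p₀:ℤ) - N*((i:ℤ)+1)))
        = (-1:ℝ)^m * q^((m:ℤ)*p₀ - N*S) := by
      have : ∀ i ∈ Finset.range m, (-q^((p₀:ℤ) - N*((i:ℤ)+1)))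
          = (-1) * q^((p₀:ℤ) - N*((i:ℤ)+1)) := fun i _ => by ring
      rw [Finset.prod_congr rfl this, Finset.prod_mul_distrib, Finset.prod_const,
        Finset.card_range]
      rw [zprod_sum hqne]
      congr 1
      rw [Finset.sum_sub_distrib, Finset.sum_const, Finset.card_range, hS, Finset.mul_sum]
      simp [nsmul_eq_mul]
    rw [hsgn]
    rw [Finset.prod_congr rfl (fun i _ => h2 i)]
    rw [hC, AA, ← hN]
    ring
  -- RHS terms
  have hterm : ∀ k ∈ Finset.range (2*m+1),
      qb Q (2*m) k * Q^(k*(k-1)/2) * z^k = C * tt p₀ q m k := by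
    intro k _
    have hTk : (2:ℤ) * ((k*(k-1)/2 : ℕ) : ℤ) = (k:ℤ)^2 - k := tri_cast k
    have hzk : z^k = (-1:ℝ)^k * q^(((p₀:ℤ) - N*m)*k) := by
      rw [hz, neg_pow, zpow_mul_nat hqne]
    have hQT : Q^(k*(k-1)/2) = q^((N:ℤ)*((k*(k-1)/2 : ℕ) : ℤ)) := by
      rw [hQz]
    have hexp : (N:ℤ)*((k*(k-1)/2 : ℕ) : ℤ) + ((p₀:ℤ) - N*m)*k
        = (Eexp p₀ ((k:ℤ) - m) : ℤ) + ((m:ℤ)*p₀ - N*S) := by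
      have hE := Eexp_spec p₀ ((k:ℤ) - m)
      have h2G : 2*((N:ℤ)*((k*(k-1)/2 : ℕ) : ℤ) + ((p₀:ℤ) - N*m)*k)
          = 2*((Eexp p₀ ((k:ℤ) - m) : ℤ) + ((m:ℤ)*p₀ - N*S)) := by
        have hNc : ((N:ℕ) : ℤ) = 2*(p₀:ℤ)+1 := by rw [hN]; push_cast; ring
        rw [hNc]
        linear_combination (2*(p₀:ℤ)+1) * hTk - hE + (2*(p₀:ℤ)+1) * hS2
      linarith
    have hsign : (-1:ℝ)^k = (-1:ℝ)^m * (-1:ℝ)^((k:ℤ) - m) := by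
      have h1 : (-1:ℝ)^((k:ℤ) - m) * (-1:ℝ)^(m:ℤ) = (-1:ℝ)^(k:ℤ) := by
        rw [← zpow_add₀ (by norm_num : (-1:ℝ) ≠ 0), sub_add_cancel]
      rw [← zpow_natCast (-1:ℝ) k, ← zpow_natCast (-1:ℝ) m, ← h1]
      ring
    have hqq : q^((N:ℤ)*((k*(k-1)/2 : ℕ) : ℤ)) * q^(((p₀:ℤ) - N*m)*k)
        = q^(((Eexp p₀ ((k:ℤ) - m) : ℕ) : ℤ)) * q^((m:ℤ)*p₀ - N*S) := by
      rw [← zpow_add₀ hqne, ← zpow_add₀ hqne, hexp]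
    calc qb Q (2*m) k * Q^(k*(k-1)/2) * z^k
        = qb Q (2*m) k * ((-1:ℝ)^k *
            (q^((N:ℤ)*((k*(k-1)/2 : ℕ) : ℤ)) * q^(((p₀:ℤ) - N*m)*k))) := by
          rw [hzk, hQT]; ring
      _ = qb Q (2*m) k * (((-1:ℝ)^m * (-1:ℝ)^((k:ℤ) - m)) *
            (q^(((Eexp p₀ ((k:ℤ) - m) : ℕ) : ℤ)) * q^((m:ℤ)*p₀ - N*S))) := by
          rw [← hsign, hqq]
      _ = C * tt p₀ q m k := by
          rw [hC, tt, hQdef, hN, ← zpow_natCast q (Eexp p₀ ((k:ℤ) - m))]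
          ring
  rw [Finset.sum_congr rfl hterm, ← Finset.mul_sum] at hg
  rw [hLHS] at hg
  exact mul_left_cancel₀ hCne hg

/-- truncated theta term over ℤ -/
noncomputable def ff (p₀ : ℕ) (q : ℝ) (m : ℕ) (j : ℤ) : ℝ :=
  if j.natAbs ≤ m then
    (-1:ℝ)^j * qb (q^(2*p₀+1)) (2*m) ((j+m).toNat) * q ^ Eexp p₀ j
  else 0

lemma ff_tsum (p₀ : ℕ) (q : ℝ) (hq0 : 0 < q) (hq1 : q < 1) (m : ℕ) :
    ∑' j : ℤ, ff p₀ q m j = AA p₀ q m := by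
  have hfin : ∀ j ∉ Finset.Icc (-(m:ℤ)) m, ff p₀ q m j = 0 := by
    intro j hj
    rw [Finset.mem_Icc] at hj
    rw [ff, if_neg (by omega)]
  rw [(hasSum_sum_of_ne_finset_zero hfin).tsum_eq]
  rw [finite_id p₀ q hq0 hq1 m]
  refine Finset.sum_nbij' (i := fun j => ((j+m).toNat)) (j := fun k => (k:ℤ) - m)
    ?_ ?_ ?_ ?_ ?_
  · intro a ha
    rw [Finset.mem_Icc] at ha
    show ((a+m).toNat) ∈ Finset.range (2*m+1)
    rw [Finset.mem_range]
    omega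
  · intro a ha
    rw [Finset.mem_range] at ha
    show ((a:ℤ) - m) ∈ Finset.Icc (-(m:ℤ)) m
    rw [Finset.mem_Icc]
    omega
  · intro a ha
    rw [Finset.mem_Icc] at ha
    show ((((a+m).toNat : ℕ)):ℤ) - m = a
    omega
  · intro a ha
    rw [Finset.mem_range] at ha
    show ((((a:ℤ) - m) + m).toNat) = a
    omega
  · intro a ha
    rw [Finset.mem_Icc] at ha
    show ff p₀ q m a = tt p₀ q m ((a+m).toNat)
    rw [ff, if_pos (by omega), tt]
    have h1 : ((((a+m).toNat : ℕ)):ℤ) - m = a := by omega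
    rw [h1]

lemma ff_tendsto (p₀ : ℕ) (q : ℝ) (hq0 : 0 < q) (hq1 : q < 1) (j : ℤ) :
    Filter.Tendsto (fun m => ff p₀ q m j) Filter.atTop
      (𝓝 ((-1:ℝ)^j * q ^ Eexp p₀ j * (PPinf (q^(2*p₀+1)))⁻¹)) := by
  set Q : ℝ := q^(2*p₀+1) with hQdef
  have hQ0 : 0 < Q := pow_pos hq0 _
  have hQ1 : Q < 1 := pow_lt_one₀ (le_of_lt hq0) hq1 (by omega)
  have htend := tendsto_PP Q hQ0 hQ1
  have hPne : PPinf Q ≠ 0 := ne_of_gt (PPinf_pos Q)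
  have c1 : Filter.Tendsto (fun m : ℕ => 2*m) Filter.atTop Filter.atTop :=
    Filter.tendsto_atTop_mono (fun n => (by omega : n ≤ 2*n)) Filter.tendsto_id
  have c2 : Filter.Tendsto (fun m : ℕ => (j + m).toNat) Filter.atTop Filter.atTop :=
    Filter.tendsto_atTop_atTop.mpr (fun b => ⟨b + j.natAbs, fun a ha => by omega⟩)
  have c3 : Filter.Tendsto (fun m : ℕ => ((m : ℤ) - j).toNat) Filter.atTop Filter.atTop :=
    Filter.tendsto_atTop_atTop.mpr (fun b => ⟨b + j.natAbs, fun a ha => by omega⟩)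
  have main : Filter.Tendsto
      (fun m => (-1:ℝ)^j * q ^ Eexp p₀ j *
        (PP Q (2*m) / (PP Q ((j+m).toNat) * PP Q (((m:ℤ) - j).toNat))))
      Filter.atTop
      (𝓝 ((-1:ℝ)^j * q ^ Eexp p₀ j * (PPinf Q / (PPinf Q * PPinf Q)))) := by
    apply Filter.Tendsto.const_mul
    exact (htend.comp c1).div ((htend.comp c2).mul (htend.comp c3))
      (mul_ne_zero hPne hPne)
  have hval : PPinf Q / (PPinf Q * PPinf Q) = (PPinf Q)⁻¹ := by
    field_simp
  rw [hval] at main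
  apply main.congr'
  filter_upwards [Filter.eventually_ge_atTop j.natAbs] with m hm
  rw [ff, if_pos hm]
  rw [qb_closed hQ0 hQ1 (2*m) ((j+m).toNat) (by omega)]
  have h2 : 2*m - (j+m).toNat = ((m:ℤ) - j).toNat := by omega
  rw [h2]
  ring

lemma ff_bound (p₀ : ℕ) (hp : 1 ≤ p₀) (q : ℝ) (hq0 : 0 < q) (hq1 : q < 1) (m : ℕ) (j : ℤ) :
    ‖ff p₀ q m j‖ ≤ q ^ j.natAbs * (PPinf (q^(2*p₀+1)))⁻¹ := by
  set Q : ℝ := q^(2*p₀+1) with hQdef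
  have hQ0 : 0 < Q := pow_pos hq0 _
  have hQ1 : Q < 1 := pow_lt_one₀ (le_of_lt hq0) hq1 (by omega)
  have hPpos := PPinf_pos Q
  have hbpos : 0 ≤ q ^ j.natAbs * (PPinf Q)⁻¹ :=
    mul_nonneg (le_of_lt (pow_pos hq0 _)) (le_of_lt (inv_pos.mpr hPpos))
  rw [ff]
  split_ifs with hcase
  · have hqb : qb Q (2*m) ((j+m).toNat)
        = PP Q (2*m) / (PP Q ((j+m).toNat) * PP Q (2*m - (j+m).toNat)) :=
      qb_closed hQ0 hQ1 (2*m) ((j+m).toNat) (by omega)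
    have hqb_nonneg : 0 ≤ qb Q (2*m) ((j+m).toNat) := by
      rw [hqb]
      exact le_of_lt (div_pos (PP_pos hQ0 hQ1 _)
        (mul_pos (PP_pos hQ0 hQ1 _) (PP_pos hQ0 hQ1 _)))
    have hqb_le : qb Q (2*m) ((j+m).toNat) ≤ (PPinf Q)⁻¹ := by
      rw [hqb]
      have ha : PP Q (2*m) ≤ PP Q ((j+m).toNat) := PP_antitone hQ0 hQ1 (by omega)
      have hb : PPinf Q ≤ PP Q (2*m - (j+m).toNat) := PPinf_le_PP hQ0 hQ1 _
      have hpa := PP_pos hQ0 hQ1 ((j+m).toNat)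
      have hpb := PP_pos hQ0 hQ1 (2*m - (j+m).toNat)
      rw [div_le_iff₀ (mul_pos hpa hpb)]
      calc PP Q (2*m) ≤ PP Q ((j+m).toNat) := ha
        _ = (PPinf Q)⁻¹ * (PP Q ((j+m).toNat) * PPinf Q) := by field_simp
        _ ≤ (PPinf Q)⁻¹ * (PP Q ((j+m).toNat) * PP Q (2*m - (j+m).toNat)) := by
            apply mul_le_mul_of_nonneg_left _ (le_of_lt (inv_pos.mpr hPpos))
            exact mul_le_mul_of_nonneg_left hb (le_of_lt hpa)
    have hqE : q ^ Eexp p₀ j ≤ q ^ j.natAbs :=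
      pow_le_pow_of_le_one (le_of_lt hq0) (le_of_lt hq1) (Eexp_ge p₀ hp j)
    have habs : ‖(-1:ℝ)^j * qb Q (2*m) ((j+m).toNat) * q ^ Eexp p₀ j‖
        = qb Q (2*m) ((j+m).toNat) * q ^ Eexp p₀ j := by
      rw [Real.norm_eq_abs, abs_mul, abs_mul]
      rw [show |(-1:ℝ)^j| = 1 by
        rcases Int.even_or_odd j with h | h
        · rw [h.neg_one_zpow]; norm_num
        · rw [h.neg_one_zpow]; norm_num]
      rw [abs_of_nonneg hqb_nonneg, abs_of_nonneg (le_of_lt (pow_pos hq0 _))]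
      ring
    rw [habs]
    calc qb Q (2*m) ((j+m).toNat) * q ^ Eexp p₀ j
        ≤ (PPinf Q)⁻¹ * q ^ j.natAbs := by
          apply mul_le_mul hqb_le hqE (le_of_lt (pow_pos hq0 _))
            (le_of_lt (inv_pos.mpr hPpos))
      _ = q ^ j.natAbs * (PPinf Q)⁻¹ := by ring
  · simpa using hbpos

lemma summable_geom_natAbs (q : ℝ) (hq0 : 0 < q) (hq1 : q < 1) :
    Summable (fun j : ℤ => q ^ j.natAbs) := by
  have hnat : Summable (fun n : ℕ => q ^ n) :=
    summable_geometric_of_lt_one (le_of_lt hq0) hq1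
  apply Summable.of_nat_of_neg_add_one
  · simpa using hnat
  · have h1 : Summable (fun n : ℕ => q ^ (n+1)) := (summable_nat_add_iff 1).mpr hnat
    apply h1.congr
    intro n
    congr 1

/-- the Jacobi triple product, in the needed specialization -/
lemma theta (p₀ : ℕ) (hp : 1 ≤ p₀) (q : ℝ) (hq0 : 0 < q) (hq1 : q < 1) :
    PPinf (q^(2*p₀+1)) *
      (Real.exp (∑' i : ℕ, Real.log (1 - q^((2*p₀+1)*i + (p₀+1)))) *
       Real.exp (∑' i : ℕ, Real.log (1 - q^(p₀ + (2*p₀+1)*i))))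
    = ∑' j : ℤ, (-1:ℝ)^j * q ^ Eexp p₀ j := by
  set Q : ℝ := q^(2*p₀+1) with hQdef
  have hQ0 : 0 < Q := pow_pos hq0 _
  have hQ1 : Q < 1 := pow_lt_one₀ (le_of_lt hq0) hq1 (by omega)
  have hPpos := PPinf_pos Q
  -- LHS limit
  have hu1 : ∀ i : ℕ, 1 ≤ (2*p₀+1)*i + (p₀+1) :=
    fun i => le_trans (by omega) (Nat.le_add_left (p₀+1) _)
  have hu2 : ∀ i : ℕ, 1 ≤ p₀ + (2*p₀+1)*i :=
    fun i => le_trans hp (Nat.le_add_right p₀ _)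
  have hg1 : ∀ n : ℕ, n ≤ (2*p₀+1)*n + (p₀+1) := by
    intro n
    calc n = 1*n + 0 := by ring
    _ ≤ (2*p₀+1)*n + (p₀+1) := by
        apply Nat.add_le_add _ (Nat.zero_le _)
        exact Nat.mul_le_mul_right n (by omega)
  have hg2 : ∀ n : ℕ, n ≤ p₀ + (2*p₀+1)*n := by
    intro n
    calc n = 0 + 1*n := by ring
    _ ≤ p₀ + (2*p₀+1)*n := by
        apply Nat.add_le_add (Nat.zero_le _)
        exact Nat.mul_le_mul_right n (by omega)
  have h1 := (hasProd_one_sub q hq0 hq1 (fun i => (2*p₀+1)*i + (p₀+1)) hu1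
    (summable_geom_shift q hq0 hq1 _ hg1)).tendsto_prod_nat
  have h2 := (hasProd_one_sub q hq0 hq1 (fun i => p₀ + (2*p₀+1)*i) hu2
    (summable_geom_shift q hq0 hq1 _ hg2)).tendsto_prod_nat
  have hAA : Filter.Tendsto (fun m => AA p₀ q m) Filter.atTop
      (𝓝 (Real.exp (∑' i : ℕ, Real.log (1 - q^((2*p₀+1)*i + (p₀+1)))) *
          Real.exp (∑' i : ℕ, Real.log (1 - q^(p₀ + (2*p₀+1)*i))))) := by
    exact (h1.mul h2).congr (fun m => by rw [AA])
  -- dominated convergence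
  have hb : Summable (fun j : ℤ => q ^ j.natAbs * (PPinf Q)⁻¹) :=
    (summable_geom_natAbs q hq0 hq1).mul_right _
  have hdom := tendsto_tsum_of_dominated_convergence (f := fun m j => ff p₀ q m j)
    (g := fun j => (-1:ℝ)^j * q ^ Eexp p₀ j * (PPinf Q)⁻¹)
    (bound := fun j => q ^ j.natAbs * (PPinf Q)⁻¹)
    hb (fun j => ff_tendsto p₀ q hq0 hq1 j)
    (Filter.Eventually.of_forall (fun m j => ff_bound p₀ hp q hq0 hq1 m j))
  have hdom' : Filter.Tendsto (fun m => AA p₀ q m) Filter.atTop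
      (𝓝 (∑' j : ℤ, (-1:ℝ)^j * q ^ Eexp p₀ j * (PPinf Q)⁻¹)) :=
    hdom.congr (fun m => ff_tsum p₀ q hq0 hq1 m)
  have heq := tendsto_nhds_unique hAA hdom'
  rw [tsum_mul_right] at heq
  rw [heq, mul_comm, mul_assoc, inv_mul_cancel₀ (ne_of_gt hPpos), mul_one]

/-- ℕ ≃ positive naturals -/
def posEquiv : ℕ ≃ {k : ℕ // 0 < k} where
  toFun := fun n => ⟨n+1, Nat.succ_pos n⟩
  invFun := fun k => (k : ℕ) - 1
  left_inv := fun n => by simp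
  right_inv := fun k => by
    ext
    have := k.2
    simp
    omega

lemma theta_sum_eq (p₀ : ℕ) (hp : 1 ≤ p₀) (q : ℝ) (hq0 : 0 < q) (hq1 : q < 1) :
    ∑' j : ℤ, (-1:ℝ)^j * q ^ Eexp p₀ j
      = 1 + ∑' k : {k : ℕ // 0 < k},
          (-1:ℝ) ^ (k : ℕ) * q ^ ((k : ℕ) ^ 2 * p₀ + (k : ℕ) * ((k : ℕ) - 1) / 2) *
            (1 + q ^ (k : ℕ)) := by
  set a : ℕ → ℝ := fun k => (-1:ℝ)^k * q ^ (k^2*p₀ + k*(k-1)/2) with ha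
  set b : ℕ → ℝ := fun k => (-1:ℝ)^k * q ^ (k^2*p₀ + k*(k-1)/2 + k) with hb
  have hq01 : (0:ℝ) ≤ q := le_of_lt hq0
  have hea : ∀ k : ℕ, k ≤ k^2*p₀ + k*(k-1)/2 := by
    intro k
    have h := Eexp_ge p₀ hp (k : ℤ)
    rwa [Eexp_natCast p₀ k, Int.natAbs_natCast] at h
  have hsa : Summable a := by
    refine (summable_geometric_of_lt_one hq01 hq1).of_norm_bounded (fun k => ?_)
    rw [ha, Real.norm_eq_abs, abs_mul, abs_pow, abs_neg, abs_one, one_pow, one_mul,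
      abs_pow, abs_of_nonneg hq01]
    exact pow_le_pow_of_le_one hq01 (le_of_lt hq1) (hea k)
  have hsb : Summable b := by
    refine (summable_geometric_of_lt_one hq01 hq1).of_norm_bounded (fun k => ?_)
    rw [hb, Real.norm_eq_abs, abs_mul, abs_pow, abs_neg, abs_one, one_pow, one_mul,
      abs_pow, abs_of_nonneg hq01]
    exact pow_le_pow_of_le_one hq01 (le_of_lt hq1) (le_trans (hea k) (by omega))
  -- identify F over nonneg and neg integers
  have hFnat : ∀ n : ℕ, (-1:ℝ)^((n:ℤ)) * q ^ Eexp p₀ (n:ℤ) = a n := by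
    intro n
    rw [Eexp_natCast, zpow_natCast, ha]
  have hFneg : ∀ n : ℕ, (-1:ℝ)^((-(n+1):ℤ)) * q ^ Eexp p₀ (-(n+1):ℤ) = b (n+1) := by
    intro n
    have h1 : ((-(n+1):ℤ)) = -((n+1 : ℕ) : ℤ) := by push_cast; ring
    rw [h1, Eexp_neg_natCast, hb]
    congr 1
    rw [zpow_neg, zpow_natCast]
    rcases Nat.even_or_odd (n+1) with h | h
    · rw [h.neg_one_pow]; norm_num
    · rw [h.neg_one_pow]; norm_num
  have h1 : HasSum (fun n : ℕ => (-1:ℝ)^((n:ℤ)) * q ^ Eexp p₀ (n:ℤ))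
      (1 + ∑' n : ℕ, a (n+1)) := by
    have hthis := hsa.hasSum
    rw [Summable.tsum_eq_zero_add hsa] at hthis
    have ha0 : a 0 = 1 := by rw [ha]; norm_num
    rw [ha0] at hthis
    rw [show (fun n : ℕ => (-1:ℝ)^((n:ℤ)) * q ^ Eexp p₀ (n:ℤ)) = a from funext hFnat]
    exact hthis
  have h2 : HasSum (fun n : ℕ => (-1:ℝ)^((-(n+1):ℤ)) * q ^ Eexp p₀ (-(n+1):ℤ))
      (∑' n : ℕ, b (n+1)) := by
    have hsb1 : Summable (fun n : ℕ => b (n+1)) := (summable_nat_add_iff 1).mpr hsb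
    rw [show (fun n : ℕ => (-1:ℝ)^((-(n+1):ℤ)) * q ^ Eexp p₀ (-(n+1):ℤ))
      = (fun n : ℕ => b (n+1)) from funext hFneg]
    exact hsb1.hasSum
  have hF : HasSum (fun j : ℤ => (-1:ℝ)^j * q ^ Eexp p₀ j)
      ((1 + ∑' n : ℕ, a (n+1)) + ∑' n : ℕ, b (n+1)) := by
    apply HasSum.of_nat_of_neg_add_one
    · exact h1
    · exact h2
  rw [hF.tsum_eq]
  -- now RHS
  have hterm : ∀ n : ℕ,
      (-1:ℝ) ^ ((posEquiv n : ℕ)) * q ^ (((posEquiv n : ℕ)) ^ 2 * p₀ +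
        ((posEquiv n : ℕ)) * (((posEquiv n : ℕ)) - 1) / 2) * (1 + q ^ ((posEquiv n : ℕ)))
      = a (n+1) + b (n+1) := by
    intro n
    have hval : ((posEquiv n : ℕ)) = n+1 := rfl
    rw [hval, ha, hb]
    rw [pow_add]
    ring
  have hsum2 : ∑' k : {k : ℕ // 0 < k},
      (-1:ℝ) ^ (k : ℕ) * q ^ ((k : ℕ) ^ 2 * p₀ + (k : ℕ) * ((k : ℕ) - 1) / 2) *
        (1 + q ^ (k : ℕ))
      = ∑' n : ℕ, (a (n+1) + b (n+1)) := by
    rw [← posEquiv.tsum_eq]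
    exact tsum_congr hterm
  rw [hsum2]
  rw [Summable.tsum_add ((summable_nat_add_iff 1).mpr hsa) ((summable_nat_add_iff 1).mpr hsb)]
  ring

lemma hasSum_sumElim {α β : Type*} {f : α → ℝ} {g : β → ℝ} {a b : ℝ}
    (hf : HasSum f a) (hg : HasSum g b) : HasSum (Sum.elim f g) (a + b) := by
  have h1 : HasSum (Sum.elim f g ∘ Sum.inl) a := hf.congr (fun x => rfl) |>.congr (fun x => rfl)
  have h2 : HasSum (Sum.elim f g ∘ Sum.inr) b := hg.congr (fun x => rfl) |>.congr (fun x => rfl)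
  exact ((Sum.inl_injective).hasSum_range_iff.mpr h1).add_isCompl
    Set.isCompl_range_inl_range_inr ((Sum.inr_injective).hasSum_range_iff.mpr h2)

/-- residue classes 0, p₀, p₀+1 mod 2p₀+1 -/
def resSet (p₀ : ℕ) : Set {n : ℕ // 0 < n} :=
  {x | (x:ℕ) % (2*p₀+1) = 0 ∨ (x:ℕ) % (2*p₀+1) = p₀ ∨ (x:ℕ) % (2*p₀+1) = p₀+1}

def tripEquiv (p₀ : ℕ) (hp : 1 ≤ p₀) : (ℕ ⊕ ℕ ⊕ ℕ) ≃ ↥(resSet p₀) where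
  toFun := fun y => match y with
    | Sum.inl i => ⟨⟨(2*p₀+1)*(i+1), Nat.mul_pos (by omega) (Nat.succ_pos i)⟩,
        Or.inl (Nat.mul_mod_right _ _)⟩
    | Sum.inr (Sum.inl i) => ⟨⟨p₀ + (2*p₀+1)*i,
        Nat.lt_of_lt_of_le hp (Nat.le_add_right _ _)⟩,
        Or.inr (Or.inl (by rw [Nat.add_mul_mod_self_left]; exact Nat.mod_eq_of_lt (by omega)))⟩
    | Sum.inr (Sum.inr i) => ⟨⟨(2*p₀+1)*i + (p₀+1),
        Nat.lt_of_lt_of_le (by omega) (Nat.le_add_left _ _)⟩,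
        Or.inr (Or.inr (by rw [Nat.mul_add_mod]; exact Nat.mod_eq_of_lt (by omega)))⟩
  invFun := fun x =>
    if (x : {n : ℕ // 0 < n}).1 % (2*p₀+1) = 0 then
      Sum.inl ((x : {n : ℕ // 0 < n}).1/(2*p₀+1) - 1)
    else if (x : {n : ℕ // 0 < n}).1 % (2*p₀+1) = p₀ then
      Sum.inr (Sum.inl ((x : {n : ℕ // 0 < n}).1/(2*p₀+1)))
    else Sum.inr (Sum.inr ((x : {n : ℕ // 0 < n}).1/(2*p₀+1)))
  left_inv := by
    rintro (i | i | i)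
    · have h0 : ((2*p₀+1)*(i+1)) % (2*p₀+1) = 0 := Nat.mul_mod_right _ _
      have hd : ((2*p₀+1)*(i+1)) / (2*p₀+1) = i+1 := Nat.mul_div_cancel_left _ (by omega)
      simp only [h0, hd, if_pos]
      rfl
    · have h0 : (p₀ + (2*p₀+1)*i) % (2*p₀+1) = p₀ := by
        rw [Nat.add_mul_mod_self_left]; exact Nat.mod_eq_of_lt (by omega)
      have hd : (p₀ + (2*p₀+1)*i) / (2*p₀+1) = i := by
        rw [Nat.add_mul_div_left _ _ (by omega : 0 < 2*p₀+1), Nat.div_eq_of_lt (by omega)]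
        omega
      simp only [h0, hd]
      rw [if_neg (by omega)]
      simp
    · have h0 : ((2*p₀+1)*i + (p₀+1)) % (2*p₀+1) = p₀+1 := by
        rw [Nat.mul_add_mod]; exact Nat.mod_eq_of_lt (by omega)
      have hd : ((2*p₀+1)*i + (p₀+1)) / (2*p₀+1) = i := by
        rw [Nat.mul_add_div (by omega : 0 < 2*p₀+1), Nat.div_eq_of_lt (by omega), Nat.add_zero]
      simp only [h0, hd]
      rw [if_neg (by omega), if_neg (by omega)]
      <;> simp
  right_inv := by
    rintro ⟨⟨n, hn⟩, hmem⟩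
    have hA : 0 < 2*p₀+1 := by omega
    have hdm := Nat.div_add_mod n (2*p₀+1)
    rcases hmem with h | h | h
    · have h' : n % (2*p₀+1) = 0 := h
      have hne : n / (2*p₀+1) ≠ 0 := by
        intro h0
        rw [h0, Nat.mul_zero, Nat.zero_add] at hdm
        rw [hdm] at h'
        omega
      simp only [if_pos h]
      apply Subtype.ext
      apply Subtype.ext
      show (2*p₀+1)*((n/(2*p₀+1) - 1)+1) = n
      rw [Nat.sub_add_cancel (Nat.one_le_iff_ne_zero.mpr hne)]
      linarith [hdm, h']
    · have h' : n % (2*p₀+1) = p₀ := h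
      have hne0 : ¬ ((⟨n, hn⟩ : {n : ℕ // 0 < n}).1 % (2*p₀+1) = 0) := by
        show ¬ (n % (2*p₀+1) = 0)
        omega
      simp only [if_neg hne0, if_pos h]
      apply Subtype.ext
      apply Subtype.ext
      show p₀ + (2*p₀+1)*(n/(2*p₀+1)) = n
      linarith [hdm, h']
    · have h' : n % (2*p₀+1) = p₀+1 := h
      have hne0 : ¬ ((⟨n, hn⟩ : {n : ℕ // 0 < n}).1 % (2*p₀+1) = 0) := by
        show ¬ (n % (2*p₀+1) = 0)
        omega
      have hnep : ¬ ((⟨n, hn⟩ : {n : ℕ // 0 < n}).1 % (2*p₀+1) = p₀) := by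
        show ¬ (n % (2*p₀+1) = p₀)
        omega
      simp only [if_neg hne0, if_neg hnep]
      apply Subtype.ext
      apply Subtype.ext
      show (2*p₀+1)*(n/(2*p₀+1)) + (p₀+1) = n
      linarith [hdm, h']

def compEquiv (p₀ : ℕ) :
    {n : ℕ // 0 < n ∧ n % (2 * p₀ + 1) ≠ 0 ∧ n % (2 * p₀ + 1) ≠ p₀ ∧
      n % (2 * p₀ + 1) ≠ p₀ + 1} ≃ ↥(resSet p₀)ᶜ where
  toFun := fun a => ⟨⟨a.1, a.2.1⟩, by
    have h := a.2
    simp only [resSet, Set.mem_compl_iff, Set.mem_setOf_eq]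
    push_neg
    exact ⟨h.2.1, h.2.2.1, h.2.2.2⟩⟩
  invFun := fun x => ⟨x.1.1, by
    have h := x.2
    simp only [resSet, Set.mem_compl_iff, Set.mem_setOf_eq] at h
    push_neg at h
    exact ⟨x.1.2, h.1, h.2.1, h.2.2⟩⟩
  left_inv := fun a => rfl
  right_inv := fun x => rfl

end Core

end GA

open GA

/-- Gordon–Andrews form: for any integer `p₀ ≥ 1`,
`(q;q)_∞⁻¹ (1 + Σ_{k>0} (-1)^k q^{k²p₀+k(k-1)/2}(1+q^k))
  = Π_{n≥1, n ≢ 0, p₀, p₀+1 (mod 2p₀+1)} (1-q^n)⁻¹`,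
here stated for all real `0 < q < 1`, with `(q;q)_∞ = Π_{n≥1}(1-q^n)`. -/
theorem gordon_andrews_product (p₀ : ℕ) (hp : 1 ≤ p₀) (q : ℝ) (hq0 : 0 < q) (hq1 : q < 1) :
    (∏' n : {n : ℕ // 0 < n}, (1 - q ^ (n : ℕ)))⁻¹ *
      (1 + ∑' k : {k : ℕ // 0 < k},
        (-1 : ℝ) ^ (k : ℕ) * q ^ ((k : ℕ) ^ 2 * p₀ + (k : ℕ) * ((k : ℕ) - 1) / 2) *
          (1 + q ^ (k : ℕ))) =
    ∏' n : {n : ℕ // 0 < n ∧ n % (2 * p₀ + 1) ≠ 0 ∧ n % (2 * p₀ + 1) ≠ p₀ ∧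
        n % (2 * p₀ + 1) ≠ p₀ + 1},
      (1 - q ^ (n : ℕ))⁻¹ := by
  have hgeom : Summable (fun n : ℕ => q ^ n) :=
    summable_geometric_of_lt_one (le_of_lt hq0) hq1
  set A : ℕ := 2*p₀+1 with hAdef
  set L : ℕ → ℝ := fun n => Real.log (1 - q^n) with hL
  -- the full product
  have hsub1 : Summable (fun x : {n : ℕ // 0 < n} => q ^ (x:ℕ)) := hgeom.subtype _
  have hall := hasProd_one_sub q hq0 hq1 (fun x : {n : ℕ // 0 < n} => (x:ℕ))
    (fun x => x.2) hsub1
  have hsumall : Summable (fun x : {n : ℕ // 0 < n} => L (x:ℕ)) :=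
    summable_log_one_sub q hq0 hq1 _ (fun x => x.2) hsub1
  -- the complement product
  have hsub2 : Summable (fun x : {n : ℕ // 0 < n ∧ n % A ≠ 0 ∧ n % A ≠ p₀ ∧ n % A ≠ p₀+1}
      => q ^ (x:ℕ)) := hgeom.subtype _
  have hT := hasProd_one_sub_inv q hq0 hq1
    (fun x : {n : ℕ // 0 < n ∧ n % A ≠ 0 ∧ n % A ≠ p₀ ∧ n % A ≠ p₀+1} => (x:ℕ))
    (fun x => x.2.1) hsub2
  -- the sum equals the theta product
  have hθ : (1 + ∑' k : {k : ℕ // 0 < k},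
        (-1 : ℝ) ^ (k : ℕ) * q ^ ((k : ℕ) ^ 2 * p₀ + (k : ℕ) * ((k : ℕ) - 1) / 2) *
          (1 + q ^ (k : ℕ)))
      = PPinf (q^A) *
        (Real.exp (∑' i : ℕ, Real.log (1 - q^(A*i + (p₀+1)))) *
         Real.exp (∑' i : ℕ, Real.log (1 - q^(p₀ + A*i)))) := by
    rw [← theta_sum_eq p₀ hp q hq0 hq1, ← theta p₀ hp q hq0 hq1]
  -- log sums split
  have hsplit := Summable.tsum_subtype_add_tsum_subtype_compl
    (f := fun x : {n : ℕ // 0 < n} => L (x:ℕ)) hsumall (resSet p₀)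
  -- identify the residue-set log sum with three sums
  have hth0 : Summable (fun i : ℕ => L (A*(i+1))) := by
    apply summable_log_one_sub q hq0 hq1 _ (fun i => Nat.mul_pos (by omega) (Nat.succ_pos i))
    apply summable_geom_shift q hq0 hq1
    intro n
    calc n ≤ 1*(n+1) := by omega
    _ ≤ A*(n+1) := Nat.mul_le_mul_right _ (by omega)
  have hthc : Summable (fun i : ℕ => L (p₀ + A*i)) := by
    apply summable_log_one_sub q hq0 hq1 _ (fun i => le_trans hp (Nat.le_add_right _ _))
    apply summable_geom_shift q hq0 hq1
    intro n
    calc n = 0 + 1*n := by ring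
    _ ≤ p₀ + A*n := Nat.add_le_add (Nat.zero_le _) (Nat.mul_le_mul_right _ (by omega))
  have hthb : Summable (fun i : ℕ => L (A*i + (p₀+1))) := by
    apply summable_log_one_sub q hq0 hq1 _
      (fun i => le_trans (by omega) (Nat.le_add_left (p₀+1) _))
    apply summable_geom_shift q hq0 hq1
    intro n
    calc n = 1*n + 0 := by ring
    _ ≤ A*n + (p₀+1) := Nat.add_le_add (Nat.mul_le_mul_right _ (by omega)) (Nat.zero_le _)
  have hressum : ∑' x : ↥(resSet p₀), L ((x : {n : ℕ // 0 < n}):ℕ)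
      = (∑' i : ℕ, L (A*(i+1))) + ((∑' i : ℕ, L (p₀ + A*i)) + (∑' i : ℕ, L (A*i + (p₀+1)))) := by
    rw [← (tripEquiv p₀ hp).tsum_eq (fun x : ↥(resSet p₀) => L ((x : {n : ℕ // 0 < n}):ℕ))]
    have hfe : (fun y : ℕ ⊕ ℕ ⊕ ℕ => L (((tripEquiv p₀ hp y : ↥(resSet p₀)) :
        {n : ℕ // 0 < n}):ℕ))
        = Sum.elim (fun i : ℕ => L (A*(i+1)))
            (Sum.elim (fun i : ℕ => L (p₀ + A*i)) (fun i : ℕ => L (A*i + (p₀+1)))) := by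
      funext y
      rcases y with i | i | i <;> rfl
    rw [hfe]
    exact (hasSum_sumElim hth0.hasSum (hasSum_sumElim hthc.hasSum hthb.hasSum)).tsum_eq
  -- identify complement log sum with the theorem's index set
  have hcompsum : ∑' x : ↥(resSet p₀)ᶜ, L ((x : {n : ℕ // 0 < n}):ℕ)
      = ∑' x : {n : ℕ // 0 < n ∧ n % A ≠ 0 ∧ n % A ≠ p₀ ∧ n % A ≠ p₀+1}, L (x:ℕ) := by
    rw [← (compEquiv p₀).tsum_eq (fun x : ↥(resSet p₀)ᶜ => L ((x : {n : ℕ // 0 < n}):ℕ))]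
    exact tsum_congr (fun c => rfl)
  -- PPinf as exp of log sum
  have hPPinf : PPinf (q^A) = Real.exp (∑' i : ℕ, L (A*(i+1))) := by
    rw [PPinf]
    congr 1
    apply tsum_congr
    intro i
    rw [hL]
    congr 2
    rw [pow_mul]
  -- final computation
  rw [hall.tprod_eq, hT.tprod_eq, hθ, hPPinf]
  rw [← hsplit, hressum, hcompsum]
  rw [Real.exp_add, Real.exp_add, Real.exp_add, Real.exp_neg]
  have e1 := Real.exp_ne_zero (∑' i : ℕ, L (A*(i+1)))
  have e2 := Real.exp_ne_zero (∑' i : ℕ, L (p₀ + A*i))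
  have e3 := Real.exp_ne_zero (∑' i : ℕ, L (A*i + (p₀+1)))
  have e4 := Real.exp_ne_zero
    (∑' x : {n : ℕ // 0 < n ∧ n % A ≠ 0 ∧ n % A ≠ p₀ ∧ n % A ≠ p₀+1}, L (x:ℕ))
  field_simp
  ring
end
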